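/- arXiv:1807.02843 — 4 statements merged into one kernel-verified Lean document; each statement's English description precedes it below -/
import Mathlib

section
/- Let G be a finite group and H ≤ G a subgroup. Then every irreducible complex representation ρ of G satisfies dim Hom_H(ρ|_H, ℂ) ≤ 1 if and only if the algebra of bi-H-invariant functions ℂ[G]^{H×H} (under convolution) is commutative. -/
open scoped BigOperators

noncomputable section

/-- The space of `H`-invariant linear functionals on a representation `ρ` of `G`,
i.e. `Hom_H(ρ|_H, ℂ)` where `ℂ` is the trivial representation of `H`. -/
def invFunctionals {G : Type} [Group G] {V : Type} [AddCommGroup V] [Module ℂ V]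
    (H : Subgroup G) (ρ : Representation ℂ G V) : Submodule ℂ (V →ₗ[ℂ] ℂ) where
  carrier := {φ | ∀ h ∈ H, ∀ v : V, φ (ρ h v) = φ v}
  add_mem' := by
    intro a b ha hb h hh v
    simp [ha h hh v, hb h hh v]
  zero_mem' := by intro h hh v; simp
  smul_mem' := by
    intro c a ha h hh v
    simp [ha h hh v]

/-- Convolution product on `ℂ[G]` for a finite group `G`. -/
def conv {G : Type} [Group G] [Fintype G] (f₁ f₂ : G → ℂ) : G → ℂ :=
  fun x => ∑ g : G, f₁ (x * g⁻¹) * f₂ g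

/-- A function on `G` is bi-`H`-invariant. -/
def BiInv {G : Type} [Group G] (H : Subgroup G) (f : G → ℂ) : Prop :=
  ∀ h₁ ∈ H, ∀ h₂ ∈ H, ∀ g : G, f (h₁ * g * h₂) = f g

/-!
On an irreducible representation `V`, an element of `ℂ[G]^{H×H}` acts by an endomorphism `T` with
`ρ(h) T = T = T ρ(h)` for `h ∈ H`, and every such `T` arises this way: by Burnside's theorem
`T = ρ(a)`, and then also `T = ρ(e a e)` with `e ∈ ℂ[G]` the average over `H`.
If `Hom_H(V, ℂ) = ℂ φ₀`, then for every functional `ψ` we have `ψ ∘ T = (ψ ∘ e) ∘ T`, where both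
`ψ ∘ e` and `φ₀ ∘ T` lie in `ℂ φ₀`; hence `ψ ∘ T₁ T₂ = ψ ∘ T₂ T₁`. Conversely, independent
invariant functionals `φ₀, φ` and `H`-fixed vectors `u, w` with `φ₀ u = 0 ≠ φ u` and `φ₀ w ≠ 0`
give the non-commuting pair `x ↦ φ₀(x) u`, `x ↦ φ(x) w`. Since `ℂ[G]` is semisimple, an element
acting trivially on every irreducible representation vanishes, so commutation of the operators
lifts to `ℂ[G]^{H×H}`.
-/

open MonoidAlgebra

section Average

variable (k : Type*) {G A : Type*} [Field k] [Group G] [Ring A] [Algebra k A]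

def subgroupAverage (π : G →* A) (H : Subgroup G) [Fintype H] : A :=
  (Fintype.card H : k)⁻¹ • ∑ h : H, π h

variable {k} (π : G →* A) {H : Subgroup G} [Fintype H]

lemma mul_subgroupAverage {g : G} (hg : g ∈ H) :
    π g * subgroupAverage k π H = subgroupAverage k π H := by
  rw [subgroupAverage, mul_smul_comm, Finset.mul_sum]
  congr 1
  exact Fintype.sum_equiv (Equiv.mulLeft ⟨g, hg⟩) _ _ fun h => by simp

lemma subgroupAverage_mul {g : G} (hg : g ∈ H) :
    subgroupAverage k π H * π g = subgroupAverage k π H := by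
  rw [subgroupAverage, smul_mul_assoc, Finset.sum_mul]
  congr 1
  exact Fintype.sum_equiv (Equiv.mulRight ⟨g, hg⟩) _ _ fun h => by simp

variable [CharZero k]

lemma card_inv_smul_card_smul (x : A) : (Fintype.card H : k)⁻¹ • Fintype.card H • x = x := by
  rw [← Nat.cast_smul_eq_nsmul k, smul_smul,
    inv_mul_cancel₀ (by exact_mod_cast Fintype.card_ne_zero), one_smul]

lemma subgroupAverage_mul_of_forall {x : A} (hx : ∀ h ∈ H, π h * x = x) :
    subgroupAverage k π H * x = x := by
  rw [subgroupAverage, smul_mul_assoc, Finset.sum_mul,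
    Finset.sum_congr rfl fun (h : H) _ => hx h h.2, Finset.sum_const, Finset.card_univ,
    card_inv_smul_card_smul]

lemma mul_subgroupAverage_of_forall {x : A} (hx : ∀ h ∈ H, x * π h = x) :
    x * subgroupAverage k π H = x := by
  rw [subgroupAverage, mul_smul_comm, Finset.mul_sum,
    Finset.sum_congr rfl fun (h : H) _ => hx h h.2, Finset.sum_const, Finset.card_univ,
    card_inv_smul_card_smul]

end Average

section BiInvariant

variable {G A : Type*} [Group G] [Monoid A]

/-- For `π = of k G` these are the elements of the Hecke algebra `k[G]^{H×H}`; for a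
representation `π = ρ`, the endomorphisms `T` with `ρ(h) T = T = T ρ(h)`. -/
def IsBiInvariant (π : G →* A) (H : Subgroup G) (x : A) : Prop :=
  ∀ h ∈ H, π h * x = x ∧ x * π h = x

variable (k : Type*) [Field k] {A : Type*} [Ring A] [Algebra k A]
  (π : G →* A) {H : Subgroup G} [Fintype H]

lemma isBiInvariant_subgroupAverage_mul_mul (x : A) :
    IsBiInvariant π H (subgroupAverage k π H * x * subgroupAverage k π H) := fun _ hh =>
  ⟨by rw [← mul_assoc, ← mul_assoc, mul_subgroupAverage π hh],
    by rw [mul_assoc, subgroupAverage_mul π hh]⟩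

variable {k π} [CharZero k]

lemma IsBiInvariant.subgroupAverage_mul_mul {x : A} (hx : IsBiInvariant π H x) :
    subgroupAverage k π H * x * subgroupAverage k π H = x := by
  rw [subgroupAverage_mul_of_forall π fun h hh => (hx h hh).1,
    mul_subgroupAverage_of_forall π fun h hh => (hx h hh).2]

end BiInvariant

theorem IsSimpleModule.lsmul_surjective_of_isAlgClosed {k A M : Type*} [Field k] [IsAlgClosed k]
    [Ring A] [Algebra k A] [AddCommGroup M] [Module k M] [Module A M] [IsScalarTower k A M]
    [IsSimpleModule A M] [FiniteDimensional k M] :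
    Function.Surjective (Algebra.lsmul k k M : A →ₐ[k] Module.End k M) := by
  intro T
  have hschur := IsSimpleModule.algebraMap_end_bijective_of_isAlgClosed (A := A) (V := M) k
  have : Module.Finite (Module.End A M) M := .of_restrictScalars_finite k _ M
  -- by Schur's lemma the `A`-endomorphisms of `M` are scalars, so they commute with `T`
  let T' : Module.End (Module.End A M) M :=
    { toFun := T
      map_add' := T.map_add
      map_smul' := fun φ m => by
        obtain ⟨c, rfl⟩ := hschur.2 φ
        simp }
  obtain ⟨a, ha⟩ := Module.Finite.toModuleEnd_moduleEnd_surjective (R := A) (M := M) T'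
  exact ⟨a, LinearMap.ext fun m => congr($ha m)⟩

universe u v in
theorem IsSemisimpleRing.eq_zero_of_forall_smul_eq_zero {k : Type v} {R : Type u} [CommRing k]
    [Ring R] [Algebra k R] [IsSemisimpleRing R] {r : R}
    (h : ∀ (M : Type u) [AddCommGroup M] [Module k M] [Module R M] [IsScalarTower k R M],
      IsSimpleModule R M → ∀ m : M, r • m = 0) : r = 0 := by
  rw [← Submodule.mem_bot R, ← IsSemisimpleRing.jacobson_eq_bot, Ring.jacobson, Module.jacobson,
    Submodule.mem_sInf]
  intro m hm
  have := h (R ⧸ m) (isSimpleModule_iff_isCoatom.2 hm) (Submodule.Quotient.mk 1)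
  rwa [← Submodule.Quotient.mk_smul, smul_eq_mul, mul_one, Submodule.Quotient.mk_eq_zero] at this

namespace Representation

section OfModule

variable {k G M : Type*} [CommRing k] [Monoid G] [AddCommGroup M] [Module k M]
  [Module (MonoidAlgebra k G) M] [IsScalarTower k (MonoidAlgebra k G) M]

lemma asAlgebraHom_ofModule' :
    (ofModule' M).asAlgebraHom = Algebra.lsmul k k M (A := MonoidAlgebra k G) := by
  simp [asAlgebraHom, ofModule']

lemma isSimpleModule_asModule_ofModule' [IsSimpleModule (MonoidAlgebra k G) M] :
    IsSimpleModule (MonoidAlgebra k G) (ofModule' (k := k) (G := G) M).asModule :=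
  IsSimpleModule.congr
    { (ofModule' M).asModuleEquiv with
      map_smul' := fun r x => by simp [asModuleEquiv_map_smul, asAlgebraHom_ofModule'] }

end OfModule

variable {k G V : Type*} [Field k] [Group G] [AddCommGroup V] [Module k V]
  {ρ : Representation k G V} {H : Subgroup G}

theorem asAlgebraHom_surjective [IsAlgClosed k] [Finite G]
    (hρ : IsSimpleModule (MonoidAlgebra k G) ρ.asModule) :
    Function.Surjective ρ.asAlgebraHom := by
  have : Module.Finite k ρ.asModule := .trans (MonoidAlgebra k G) ρ.asModule
  intro T
  obtain ⟨a, ha⟩ := IsSimpleModule.lsmul_surjective_of_isAlgClosed (A := MonoidAlgebra k G)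
    (ρ.asModuleEquiv.symm.conj T)
  exact ⟨a, LinearMap.ext fun v => congr($ha v)⟩

variable (ρ) in
lemma asAlgebraHom_subgroupAverage [Fintype H] :
    ρ.asAlgebraHom (subgroupAverage k (of k G) H) = subgroupAverage k ρ H := by
  simp [subgroupAverage, map_sum]

end Representation

variable {k G V : Type*} [Field k] [Group G] [AddCommGroup V] [Module k V] in
lemma IsBiInvariant.asAlgebraHom (ρ : Representation k G V) {H : Subgroup G}
    {a : MonoidAlgebra k G} (ha : IsBiInvariant (of k G) H a) :
    IsBiInvariant ρ H (ρ.asAlgebraHom a) := fun h hh => by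
  simp only [← ρ.asAlgebraHom_of, ← map_mul, (ha h hh).1, (ha h hh).2, and_self]

variable {k G V : Type*} [Field k] [CharZero k] [Group G] [AddCommGroup V] [Module k V] in
lemma Representation.exists_isBiInvariant_asAlgebraHom_eq {ρ : Representation k G V}
    {H : Subgroup G} [Fintype H] (hρ : Function.Surjective ρ.asAlgebraHom)
    {T : Module.End k V} (hT : IsBiInvariant ρ H T) :
    ∃ a, IsBiInvariant (of k G) H a ∧ ρ.asAlgebraHom a = T := by
  obtain ⟨a, rfl⟩ := hρ T
  refine ⟨subgroupAverage k (of k G) H * a * subgroupAverage k (of k G) H,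
    isBiInvariant_subgroupAverage_mul_mul k _ a, ?_⟩
  rw [map_mul, map_mul, ρ.asAlgebraHom_subgroupAverage, hT.subgroupAverage_mul_mul]

section InvFunctionals

variable {G V : Type} [Group G] [AddCommGroup V] [Module ℂ V] {ρ : Representation ℂ G V}
  {H : Subgroup G}

lemma comp_mem_invFunctionals {T : Module.End ℂ V} (hT : ∀ h ∈ H, T * ρ h = T)
    (ψ : Module.Dual ℂ V) : ψ ∘ₗ T ∈ invFunctionals H ρ := fun h hh v => by
  simp only [LinearMap.comp_apply, ← Module.End.mul_apply, hT h hh]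

lemma isBiInvariant_smulRight {φ : Module.Dual ℂ V} (hφ : φ ∈ invFunctionals H ρ) {u : V}
    (hu : ∀ h ∈ H, ρ h u = u) : IsBiInvariant ρ H (φ.smulRight u) := fun h hh =>
  ⟨LinearMap.ext fun v => by simp [hu h hh], LinearMap.ext fun v => by simp [hφ h hh v]⟩

variable [Fintype H]

lemma comp_subgroupAverage_of_mem_invFunctionals {φ : Module.Dual ℂ V}
    (hφ : φ ∈ invFunctionals H ρ) : φ ∘ₗ subgroupAverage ℂ ρ H = φ := by
  ext v
  simp only [subgroupAverage, LinearMap.comp_apply, LinearMap.smul_apply, LinearMap.sum_apply,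
    map_smul, map_sum, fun h : H => hφ h h.2 v, Finset.sum_const, Finset.card_univ]
  exact card_inv_smul_card_smul (φ v)

theorem commute_of_rank_invFunctionals_le_one (hS : Module.rank ℂ (invFunctionals H ρ) ≤ 1)
    {T₁ T₂ : Module.End ℂ V} (h₁ : IsBiInvariant ρ H T₁) (h₂ : IsBiInvariant ρ H T₂) :
    Commute T₁ T₂ := by
  obtain ⟨φ₀, hφ₀⟩ := (rank_submodule_le_one_iff' _).1 hS
  have hspan {T : Module.End ℂ V} (hT : ∀ h ∈ H, T * ρ h = T) (ψ : Module.Dual ℂ V) :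
      ∃ c : ℂ, ψ ∘ₗ T = c • φ₀ :=
    (Submodule.mem_span_singleton.1 (hφ₀ (comp_mem_invFunctionals hT ψ))).imp fun _ => Eq.symm
  obtain ⟨l₁, hl₁⟩ := hspan (fun h hh => (h₁ h hh).2) φ₀
  obtain ⟨l₂, hl₂⟩ := hspan (fun h hh => (h₂ h hh).2) φ₀
  refine LinearMap.ext fun x => Module.eval_apply_injective ℂ (LinearMap.ext fun ψ => ?_)
  obtain ⟨a, ha⟩ := hspan (fun h hh => subgroupAverage_mul (k := ℂ) ρ hh) ψ
  have hψ {T : Module.End ℂ V} (hT : IsBiInvariant ρ H T) (z : V) : ψ (T z) = a * φ₀ (T z) := by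
    have := congr($ha (T z))
    rwa [LinearMap.comp_apply, ← Module.End.mul_apply,
      subgroupAverage_mul_of_forall ρ fun h hh => (hT h hh).1] at this
  have hφ₁ (z : V) : φ₀ (T₁ z) = l₁ * φ₀ z := congr($hl₁ z)
  have hφ₂ (z : V) : φ₀ (T₂ z) = l₂ * φ₀ z := congr($hl₂ z)
  simp only [Module.Dual.eval_apply, Module.End.mul_apply, hψ h₁, hψ h₂, hφ₁, hφ₂]
  ring

theorem rank_invFunctionals_le_one_of_commute
    (hcomm : ∀ T₁ T₂ : Module.End ℂ V,
      IsBiInvariant ρ H T₁ → IsBiInvariant ρ H T₂ → Commute T₁ T₂) :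
    Module.rank ℂ (invFunctionals H ρ) ≤ 1 := by
  rw [rank_submodule_le_one_iff']
  by_contra! hne
  obtain ⟨φ₀, hφ₀, hφ₀0⟩ := SetLike.not_le_iff_exists.1 (hne 0)
  obtain ⟨φ, hφ, hφφ₀⟩ := SetLike.not_le_iff_exists.1 (hne φ₀)
  obtain ⟨x, hx₀, hx⟩ : ∃ x, φ₀ x = 0 ∧ φ x ≠ 0 := by
    by_contra! h
    refine hφφ₀ ?_
    simpa using mem_span_of_iInf_ker_le_ker (L := fun _ : Unit => φ₀) (K := φ)
      (by simpa [SetLike.le_def] using h)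
  obtain ⟨y, hy⟩ : ∃ y, φ₀ y ≠ 0 := by
    by_contra! h
    exact hφ₀0 (by rw [show φ₀ = 0 by ext; exact h _]; exact zero_mem _)
  set e := subgroupAverage ℂ ρ H
  have hfix (z : V) (h : G) (hh : h ∈ H) : ρ h (e z) = e z :=
    congr($(mul_subgroupAverage ρ hh) z)
  have heval {ψ : Module.Dual ℂ V} (hψ : ψ ∈ invFunctionals H ρ) (z : V) : ψ (e z) = ψ z :=
    congr($(comp_subgroupAverage_of_mem_invFunctionals hψ) z)
  have key := congr($(hcomm _ _ (isBiInvariant_smulRight hφ₀ (hfix x))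
    (isBiInvariant_smulRight hφ (hfix y))) (e x))
  have hex : e x = 0 := by simpa [heval hφ₀, heval hφ, hx₀, hx, hy] using key
  exact hx (by rw [← heval hφ, hex, map_zero])

end InvFunctionals

section HeckeAlgebra

variable {G : Type} [Group G] {H : Subgroup G}

lemma biInv_coeff_iff {a : MonoidAlgebra ℂ G} :
    BiInv H ⇑a.coeff ↔ IsBiInvariant (of ℂ G) H a := by
  have hl (h : G) : of ℂ G h * a = a ↔ ∀ x, a.coeff (h⁻¹ * x) = a.coeff x := by
    simp [MonoidAlgebra.ext_iff, Finsupp.ext_iff, coeff_single_mul_apply]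
  have hr (h : G) : a * of ℂ G h = a ↔ ∀ x, a.coeff (x * h⁻¹) = a.coeff x := by
    simp [MonoidAlgebra.ext_iff, Finsupp.ext_iff, coeff_mul_single_apply]
  simp only [IsBiInvariant, hl, hr]
  refine ⟨fun ha h hh => ⟨fun x => ?_, fun x => ?_⟩, fun ha h₁ hh₁ h₂ hh₂ g => ?_⟩
  · simpa using ha h⁻¹ (inv_mem hh) 1 (one_mem H) x
  · simpa using ha 1 (one_mem H) h⁻¹ (inv_mem hh) x
  · calc a.coeff (h₁ * g * h₂) = a.coeff (h₁ * g) := by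
          simpa using (ha h₂⁻¹ (inv_mem hh₂)).2 (h₁ * g)
      _ = a.coeff g := by simpa using (ha h₁⁻¹ (inv_mem hh₁)).1 g

variable [Fintype G]

lemma conv_coeff (a b : MonoidAlgebra ℂ G) : conv ⇑a.coeff ⇑b.coeff = ⇑(a * b).coeff := by
  ext x
  rw [coeff_mul_apply_right, Finsupp.sum_fintype _ _ fun _ => mul_zero _]
  rfl

theorem conv_comm_iff :
    (∀ f₁ f₂ : G → ℂ, BiInv H f₁ → BiInv H f₂ → conv f₁ f₂ = conv f₂ f₁) ↔
      ∀ a b : MonoidAlgebra ℂ G, IsBiInvariant (of ℂ G) H a → IsBiInvariant (of ℂ G) H b →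
        Commute a b := by
  have hsurj : Function.Surjective fun a : MonoidAlgebra ℂ G => ⇑a.coeff :=
    fun f => ⟨ofCoeff (Finsupp.equivFunOnFinite.symm f), rfl⟩
  simp only [hsurj.forall, biInv_coeff_iff, conv_coeff, DFunLike.coe_fn_eq,
    coeff_injective.eq_iff, commute_iff_eq]

theorem commute_of_forall_rank_invFunctionals_le_one
    (hmult : ∀ (V : Type) [AddCommGroup V] [Module ℂ V] (ρ : Representation ℂ G V),
      IsSimpleModule (MonoidAlgebra ℂ G) ρ.asModule → Module.rank ℂ (invFunctionals H ρ) ≤ 1)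
    {a b : MonoidAlgebra ℂ G} (ha : IsBiInvariant (of ℂ G) H a)
    (hb : IsBiInvariant (of ℂ G) H b) : Commute a b := by
  have := Fintype.ofFinite H
  rw [commute_iff_eq, ← sub_eq_zero]
  refine IsSemisimpleRing.eq_zero_of_forall_smul_eq_zero (k := ℂ) ?_
  intro M _ _ _ _ hM m
  let ρ := Representation.ofModule' (k := ℂ) (G := G) M
  have hab := commute_of_rank_invFunctionals_le_one
    (hmult M ρ Representation.isSimpleModule_asModule_ofModule') (ha.asAlgebraHom ρ)
    (hb.asAlgebraHom ρ)
  have := LinearMap.congr_fun hab.eq m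
  simp only [Module.End.mul_apply, ρ, Representation.asAlgebraHom_ofModule',
    Algebra.lsmul_coe] at this
  rw [sub_smul, mul_smul, mul_smul, this, sub_self]

theorem rank_invFunctionals_le_one_of_forall_commute
    (hcomm : ∀ a b : MonoidAlgebra ℂ G, IsBiInvariant (of ℂ G) H a →
      IsBiInvariant (of ℂ G) H b → Commute a b)
    {V : Type} [AddCommGroup V] [Module ℂ V] {ρ : Representation ℂ G V}
    (hρ : IsSimpleModule (MonoidAlgebra ℂ G) ρ.asModule) :
    Module.rank ℂ (invFunctionals H ρ) ≤ 1 := by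
  have := Fintype.ofFinite H
  refine rank_invFunctionals_le_one_of_commute fun T₁ T₂ h₁ h₂ => ?_
  obtain ⟨a₁, ha₁, rfl⟩ := ρ.exists_isBiInvariant_asAlgebraHom_eq
    (Representation.asAlgebraHom_surjective hρ) h₁
  obtain ⟨a₂, ha₂, rfl⟩ := ρ.exists_isBiInvariant_asAlgebraHom_eq
    (Representation.asAlgebraHom_surjective hρ) h₂
  exact (hcomm a₁ a₂ ha₁ ha₂).map ρ.asAlgebraHom

end HeckeAlgebra

/-- For a finite group `G` and a subgroup `H`, every irreducible complex
representation `ρ` of `G` satisfies `dim Hom_H(ρ|_H, ℂ) ≤ 1` if and only if the algebra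
`ℂ[G]^{H×H}` of bi-`H`-invariant functions on `G` is commutative under convolution. -/
theorem stmt0 {G : Type} [Group G] [Fintype G] (H : Subgroup G) :
    (∀ (V : Type) [AddCommGroup V] [Module ℂ V] (ρ : Representation ℂ G V),
        IsSimpleModule (MonoidAlgebra ℂ G) ρ.asModule →
        Module.rank ℂ (invFunctionals H ρ) ≤ 1) ↔
      (∀ f₁ f₂ : G → ℂ, BiInv H f₁ → BiInv H f₂ → conv f₁ f₂ = conv f₂ f₁) := by
  rw [conv_comm_iff]
  exact ⟨fun hmult _ _ => commute_of_forall_rank_invFunctionals_le_one hmult,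
    fun hcomm _ _ _ _ => rank_invFunctionals_le_one_of_forall_commute hcomm⟩
end
end

section
/- Gelfand's trick for finite groups: if there exists an anti-involution σ of a finite group G with σ(H) = H and HσgH = HgH for all g ∈ G, then every irreducible complex representation ρ of G satisfies dim Hom_H(ρ|_H, ℂ) ≤ 1. -/
noncomputable section

/-!
Let `e = ∑_{h ∈ H} h ∈ ℂ[G]`. Extended linearly, `σ` becomes an anti-automorphism `σ̃` of `ℂ[G]`
fixing `e`; as `e h = h e = e` for `h ∈ H` and `σ g ∈ HgH`, it also fixes every `e g e`, hence the
whole Hecke algebra `e ℂ[G] e`, which is therefore commutative: `xy = σ̃(xy) = σ̃ y σ̃ x = yx`.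
This algebra acts on `W = Hom_H(ρ, ℂ)` by `φ ↦ φ ∘ ρ(x)`, and irreducibility of `ρ` makes the
action transitive on nonzero vectors: for `φ ≠ 0` the functionals `φ ∘ ρ(a)` exhaust `V*`, and
`φ ∘ ρ(e a e) = |H|² φ ∘ ρ(a)` when both `φ` and `φ ∘ ρ(a)` lie in `W`. Finally, a transitive
commuting family on a finite-dimensional complex space forces dimension `≤ 1`: if `T x = y`,
`T χ = μ χ` and `U χ = x`, then `y = T U χ = U T χ = μ x`.
-/

open MonoidAlgebra DoubleCoset

namespace Subgroup

variable {k G : Type*} [CommSemiring k] [Group G]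

variable (k) in
def sumSingle (H : Subgroup G) [Fintype H] : MonoidAlgebra k G := ∑ h : H, single (h : G) 1

variable {H : Subgroup G} [Fintype H]

theorem sumSingle_mul_single {h : G} (hh : h ∈ H) :
    H.sumSingle k * single h 1 = H.sumSingle k := by
  simp only [sumSingle, Finset.sum_mul, single_mul_single, mul_one]
  exact Fintype.sum_equiv (Equiv.mulRight ⟨h, hh⟩) _ _ fun _ ↦ rfl

theorem single_mul_sumSingle {h : G} (hh : h ∈ H) :
    single h 1 * H.sumSingle k = H.sumSingle k := by
  simp only [sumSingle, Finset.mul_sum, single_mul_single, mul_one]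
  exact Fintype.sum_equiv (Equiv.mulLeft ⟨h, hh⟩) _ _ fun _ ↦ rfl

theorem sumSingle_mul_single_mul_sumSingle_of_mem_doubleCoset {g g' : G}
    (hg : g' ∈ doubleCoset g H H) (r : k) :
    H.sumSingle k * single g' r * H.sumSingle k = H.sumSingle k * single g r * H.sumSingle k := by
  obtain ⟨a, ha, b, hb, rfl⟩ := mem_doubleCoset.mp hg
  have : single (a * g * b) r = single a 1 * single g r * single b (1 : k) := by
    simp [single_mul_single]
  rw [this, ← mul_assoc, ← mul_assoc, sumSingle_mul_single ha]
  simp only [mul_assoc, single_mul_sumSingle hb]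

end Subgroup

section AntiInvolution

variable {k : Type*} [CommSemiring k]

theorem MonoidAlgebra.mapDomainLinearMap_mul_of_anti {M : Type*} [Monoid M] {σ : M → M}
    (hσ : ∀ a b, σ (a * b) = σ b * σ a) (x y : MonoidAlgebra k M) :
    mapDomainLinearMap k k σ (x * y) =
      mapDomainLinearMap k k σ y * mapDomainLinearMap k k σ x := by
  induction x using induction_linear with
  | zero => simp
  | add x x' hx hx' => simp only [add_mul, mul_add, map_add, hx, hx']
  | single a r =>
    induction y using induction_linear with
    | zero => simp
    | add y y' hy hy' => simp only [add_mul, mul_add, map_add, hy, hy']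
    | single b s => simp [single_mul_single, hσ, mul_comm r s]

variable {G : Type*} [Group G] {H : Subgroup G} [Fintype H] {σ : G → G}

theorem Subgroup.mapDomainLinearMap_sumSingle (hσ : Set.BijOn σ H H) :
    mapDomainLinearMap k k σ (H.sumSingle k) = H.sumSingle k := by
  simp only [Subgroup.sumSingle, map_sum, mapDomainLinearMap_single]
  exact Fintype.sum_equiv (hσ.equiv σ) _ _ fun _ ↦ rfl

theorem Subgroup.mapDomainLinearMap_sumSingle_mul_mul_sumSingle
    (hanti : ∀ a b, σ (a * b) = σ b * σ a) (hbij : Set.BijOn σ H H)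
    (hdc : ∀ g, σ g ∈ doubleCoset g H H) (a : MonoidAlgebra k G) :
    mapDomainLinearMap k k σ (H.sumSingle k * a * H.sumSingle k) =
      H.sumSingle k * a * H.sumSingle k := by
  rw [mapDomainLinearMap_mul_of_anti hanti, mapDomainLinearMap_mul_of_anti hanti,
    mapDomainLinearMap_sumSingle hbij, ← mul_assoc]
  induction a using induction_linear with
  | zero => simp
  | add x x' hx hx' => simp only [add_mul, mul_add, map_add, hx, hx']
  | single g r =>
    rw [mapDomainLinearMap_single, sumSingle_mul_single_mul_sumSingle_of_mem_doubleCoset (hdc g)]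

theorem Subgroup.commute_sumSingle_mul_mul_sumSingle (hanti : ∀ a b, σ (a * b) = σ b * σ a)
    (hbij : Set.BijOn σ H H) (hdc : ∀ g, σ g ∈ doubleCoset g H H) (a b : MonoidAlgebra k G) :
    Commute (H.sumSingle k * a * H.sumSingle k) (H.sumSingle k * b * H.sumSingle k) := by
  set e := H.sumSingle k
  have hprod : e * a * e * (e * b * e) = e * (a * e * e * b) * e := by simp only [mul_assoc]
  calc e * a * e * (e * b * e)
      = mapDomainLinearMap k k σ (e * a * e * (e * b * e)) := by
        rw [hprod, mapDomainLinearMap_sumSingle_mul_mul_sumSingle hanti hbij hdc]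
    _ = e * b * e * (e * a * e) := by
        rw [mapDomainLinearMap_mul_of_anti hanti,
          mapDomainLinearMap_sumSingle_mul_mul_sumSingle hanti hbij hdc,
          mapDomainLinearMap_sumSingle_mul_mul_sumSingle hanti hbij hdc]

end AntiInvolution

theorem Module.rank_le_one_of_commute_of_forall_exists_apply_eq {K W ι : Type*} [Field K]
    [IsAlgClosed K] [AddCommGroup W] [Module K W] [FiniteDimensional K W]
    (T : ι → Module.End K W) (hT : ∀ i j, Commute (T i) (T j))
    (htrans : ∀ x y : W, x ≠ 0 → ∃ i, T i x = y) : Module.rank K W ≤ 1 := by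
  rw [rank_le_one_iff]
  rcases subsingleton_or_nontrivial W with hW | hW
  · exact ⟨0, fun v ↦ ⟨0, Subsingleton.elim _ _⟩⟩
  obtain ⟨x, hx⟩ := exists_ne (0 : W)
  refine ⟨x, fun y ↦ ?_⟩
  obtain ⟨i, rfl⟩ := htrans x y hx
  obtain ⟨μ, hμ⟩ := (T i).exists_eigenvalue
  obtain ⟨χ, hχ⟩ := hμ.exists_hasEigenvector
  obtain ⟨j, rfl⟩ := htrans χ x hχ.2
  refine ⟨μ, ?_⟩
  rw [← Module.End.mul_apply, (hT i j).eq, Module.End.mul_apply, hχ.apply_eq_smul, map_smul]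

theorem Representation.exists_dualMap_asAlgebraHom_eq {k G V : Type*} [Field k] [Group G]
    [AddCommGroup V] [Module k V] [FiniteDimensional k V] (ρ : Representation k G V)
    [IsSimpleModule (MonoidAlgebra k G) ρ.asModule] {φ : Module.Dual k V} (hφ : φ ≠ 0)
    (ψ : Module.Dual k V) : ∃ a, (ρ.asAlgebraHom a).dualMap φ = ψ := by
  let F : MonoidAlgebra k G →ₗ[k] Module.Dual k V :=
    LinearMap.llcomp k V V k φ ∘ₗ ρ.asAlgebraHom.toLinearMap
  suffices LinearMap.range F = ⊤ from LinearMap.range_eq_top.mp this ψ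
  rw [← Submodule.span_eq (LinearMap.range F), LinearMap.coe_range]
  refine Submodule.span_eq_top_of_ne_zero fun z hz ↦ ?_
  obtain ⟨v, hv⟩ := not_forall.mp fun h ↦ hφ (LinearMap.ext h)
  have hz' : (ρ.asModuleEquiv.symm z) ≠ 0 := by simpa using hz
  obtain ⟨a, ha⟩ := IsSimpleModule.toSpanSingleton_surjective (MonoidAlgebra k G) hz'
    (ρ.asModuleEquiv.symm v)
  have hav : ρ.asAlgebraHom a z = v := by simpa using congrArg ρ.asModuleEquiv ha
  exact ⟨F a, ⟨a, rfl⟩, by simpa [F, hav] using hv⟩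

namespace Representation

theorem dualMap_asAlgebraHom_mul {k G V : Type*} [CommSemiring k] [Monoid G] [AddCommMonoid V]
    [Module k V] (ρ : Representation k G V) (a b : MonoidAlgebra k G) (φ : Module.Dual k V) :
    (ρ.asAlgebraHom (a * b)).dualMap φ =
      (ρ.asAlgebraHom b).dualMap ((ρ.asAlgebraHom a).dualMap φ) := by
  rw [map_mul]
  rfl

variable {G V : Type} [Group G] [AddCommGroup V] [Module ℂ V] (ρ : Representation ℂ G V)
  {H : Subgroup G} [Fintype H]

theorem dualMap_sumSingle_of_mem_invFunctionals {φ : Module.Dual ℂ V}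
    (hφ : φ ∈ invFunctionals H ρ) :
    (ρ.asAlgebraHom (H.sumSingle ℂ)).dualMap φ = (Fintype.card H : ℂ) • φ := by
  ext v
  simp [Subgroup.sumSingle, hφ _ (SetLike.coe_mem _)]

theorem dualMap_mul_sumSingle_mem_invFunctionals (a : MonoidAlgebra ℂ G) (φ : Module.Dual ℂ V) :
    (ρ.asAlgebraHom (a * H.sumSingle ℂ)).dualMap φ ∈ invFunctionals H ρ := by
  intro h hh v
  rw [LinearMap.dualMap_apply, LinearMap.dualMap_apply, ← asAlgebraHom_single_one,
    ← Module.End.mul_apply, ← map_mul, mul_assoc, Subgroup.sumSingle_mul_single hh]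

theorem dualMap_sumSingle_mul_mul_sumSingle {φ : Module.Dual ℂ V} {a : MonoidAlgebra ℂ G}
    (hφ : φ ∈ invFunctionals H ρ) (haφ : (ρ.asAlgebraHom a).dualMap φ ∈ invFunctionals H ρ) :
    (ρ.asAlgebraHom (H.sumSingle ℂ * a * H.sumSingle ℂ)).dualMap φ =
      (Fintype.card H : ℂ) ^ 2 • (ρ.asAlgebraHom a).dualMap φ := by
  rw [dualMap_asAlgebraHom_mul, dualMap_asAlgebraHom_mul,
    dualMap_sumSingle_of_mem_invFunctionals ρ hφ, map_smul, map_smul,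
    dualMap_sumSingle_of_mem_invFunctionals ρ haφ, smul_smul, sq]

def heckeOperator (H : Subgroup G) [Fintype H] (a : MonoidAlgebra ℂ G) :
    Module.End ℂ (invFunctionals H ρ) :=
  (ρ.asAlgebraHom (H.sumSingle ℂ * a * H.sumSingle ℂ)).dualMap.restrict fun φ _ ↦
    dualMap_mul_sumSingle_mem_invFunctionals ρ _ φ

theorem commute_heckeOperator
    (hH : ∀ a b : MonoidAlgebra ℂ G, Commute (H.sumSingle ℂ * a * H.sumSingle ℂ)
      (H.sumSingle ℂ * b * H.sumSingle ℂ)) (a b : MonoidAlgebra ℂ G) :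
    Commute (ρ.heckeOperator H a) (ρ.heckeOperator H b) :=
  LinearMap.ext fun φ ↦ Subtype.ext <| by
    simp only [heckeOperator, Module.End.mul_apply, LinearMap.coe_restrict_apply,
      ← dualMap_asAlgebraHom_mul, (hH b a).eq]

theorem exists_heckeOperator_apply_eq [FiniteDimensional ℂ V]
    [IsSimpleModule (MonoidAlgebra ℂ G) ρ.asModule] (φ ψ : invFunctionals H ρ) (hφ : φ ≠ 0) :
    ∃ a, ρ.heckeOperator H a φ = ψ := by
  obtain ⟨c, hc⟩ := ρ.exists_dualMap_asAlgebraHom_eq (Subtype.coe_ne_coe.mpr hφ) ψ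
  set N : ℂ := (Fintype.card H : ℂ) ^ 2
  have hN : N ≠ 0 := by simp [N]
  have hNc : (ρ.asAlgebraHom (N⁻¹ • c)).dualMap φ = N⁻¹ • (ψ : Module.Dual ℂ V) := by
    ext v
    simp [← hc]
  refine ⟨N⁻¹ • c, Subtype.ext ?_⟩
  rw [heckeOperator, LinearMap.coe_restrict_apply, dualMap_sumSingle_mul_mul_sumSingle ρ φ.2
    (hNc ▸ Submodule.smul_mem _ _ ψ.2), hNc, smul_smul, mul_inv_cancel₀ hN, one_smul]

end Representation

/-- **Gelfand's trick for finite groups.** If there is an anti-involution `σ`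
of a finite group `G` with `σ(H) = H` and `Hσ(g)H = HgH` for all `g`, then every irreducible
complex representation `ρ` of `G` satisfies `dim Hom_H(ρ|_H, ℂ) ≤ 1`. -/
theorem stmt1 {G : Type} [Group G] [Fintype G] (H : Subgroup G) (σ : G → G)
    (hmul : ∀ a b : G, σ (a * b) = σ b * σ a)
    (hinvol : ∀ g : G, σ (σ g) = g)
    (hH : σ '' (H : Set G) = (H : Set G))
    (hcoset : ∀ g : G,
      {x : G | ∃ h₁ ∈ H, ∃ h₂ ∈ H, x = h₁ * σ g * h₂} =
      {x : G | ∃ h₁ ∈ H, ∃ h₂ ∈ H, x = h₁ * g * h₂}) :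
    ∀ (V : Type) [AddCommGroup V] [Module ℂ V] (ρ : Representation ℂ G V),
      IsSimpleModule (MonoidAlgebra ℂ G) ρ.asModule →
      Module.rank ℂ (invFunctionals H ρ) ≤ 1 := by
  intro V _ _ ρ _
  classical
  have : Module.Finite ℂ ρ.asModule := Module.Finite.trans (MonoidAlgebra ℂ G) ρ.asModule
  have : FiniteDimensional ℂ V := this
  have hbij : Set.BijOn σ H H := by
    simpa only [hH] using (Function.LeftInverse.injective hinvol).injOn (s := H).bijOn_image
  have hdc (g : G) : σ g ∈ doubleCoset g H H := by
    have : σ g ∈ {x | ∃ h₁ ∈ H, ∃ h₂ ∈ H, x = h₁ * σ g * h₂} :=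
      ⟨1, H.one_mem, 1, H.one_mem, by simp⟩
    rw [hcoset g] at this
    exact mem_doubleCoset.mpr this
  exact Module.rank_le_one_of_commute_of_forall_exists_apply_eq (ρ.heckeOperator H)
    (ρ.commute_heckeOperator (Subgroup.commute_sumSingle_mul_mul_sumSingle hmul hbij hdc))
    fun φ ψ hφ ↦ ρ.exists_heckeOperator_apply_eq φ ψ hφ
end
end

section
/- Let B be a commutative integral domain (or more generally a commutative ring) and M a locally free B-module such that for every prime (equivalently, every maximal) ideal 𝔪 of B one has dim_{B/𝔪}(M ⊗_B B/𝔪) ≤ 1. If M is finitely presented, then End_B(M) is commutative. -/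
open scoped TensorProduct

/-- Endomorphisms of a cyclic module over a commutative ring commute. -/
lemma aux_comm_of_cyclic {R M : Type*} [CommRing R] [AddCommGroup M] [Module R M]
    (x : M) (hx : Submodule.span R {x} = ⊤) (φ ψ : M →ₗ[R] M) (m : M) :
    φ (ψ m) = ψ (φ m) := by
  have hmem : ∀ y : M, ∃ c : R, c • x = y := fun y =>
    Submodule.mem_span_singleton.mp (hx ▸ Submodule.mem_top)
  obtain ⟨c, hc⟩ := hmem (ψ x)
  obtain ⟨d, hd⟩ := hmem (φ x)
  obtain ⟨e, he⟩ := hmem m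
  simp only [← he, map_smul]
  rw [← hc, ← hd, map_smul, map_smul, ← hc, ← hd, smul_smul, smul_smul, smul_smul, smul_smul,
    mul_right_comm e c d]

/-- Let `B` be a commutative ring and `M` a locally free (i.e. finitely
presented projective) `B`-module such that for every maximal ideal `𝔪` of `B` the fiber
dimension `dim_{B/𝔪}(B/𝔪 ⊗[B] M)` is at most `1`. Then `End_B(M)` is commutative. -/
theorem stmt9 {B : Type} [CommRing B] {M : Type} [AddCommGroup M] [Module B M]
    [Module.FinitePresentation B M] [Module.Projective B M]
    (hfiber : ∀ (𝔪 : Ideal B), 𝔪.IsMaximal →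
      Module.rank (B ⧸ 𝔪) ((B ⧸ 𝔪) ⊗[B] M) ≤ 1) :
    ∀ a b : Module.End B M, a * b = b * a := by
  intro a b
  apply LinearMap.eq_of_localization_maximal
    (fun P _ => LocalizedModule P.primeCompl M)
    (fun P _ => LocalizedModule.mkLinearMap P.primeCompl M)
    (fun P _ => LocalizedModule P.primeCompl M)
    (fun P _ => LocalizedModule.mkLinearMap P.primeCompl M)
  intro P hP
  set S := P.primeCompl
  set A := Localization.AtPrime P
  set Mₚ := LocalizedModule S M
  set f : M →ₗ[B] Mₚ := LocalizedModule.mkLinearMap S M with hf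
  -- step 1: find `x : M` whose image generates the fiber `(B⧸P) ⊗ M`.
  letI : Field (B ⧸ P) := Ideal.Quotient.field P
  obtain ⟨x, hxgen⟩ : ∃ x : M, ∀ v : (B ⧸ P) ⊗[B] M,
      ∃ r : B ⧸ P, r • ((1 : B ⧸ P) ⊗ₜ[B] x) = v := by
    obtain ⟨v₀, hv₀⟩ := rank_le_one_iff.mp (hfiber P hP)
    by_cases hz : ∀ m : M, (1 : B ⧸ P) ⊗ₜ[B] m = 0
    · -- the fiber is zero
      refine ⟨0, fun v => ⟨0, ?_⟩⟩
      have hv0 : v = 0 := by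
        have : ∀ w : (B ⧸ P) ⊗[B] M, w = 0 := by
          intro w
          induction w with
          | zero => rfl
          | tmul c m =>
            have : c ⊗ₜ[B] m = c • ((1 : B ⧸ P) ⊗ₜ[B] m) := by
              rw [TensorProduct.smul_tmul', smul_eq_mul, mul_one]
            rw [this, hz m, smul_zero]
          | add u w hu hw => rw [hu, hw, add_zero]
        exact this v
      rw [hv0, zero_smul]
    · push_neg at hz
      obtain ⟨m, hm⟩ := hz
      refine ⟨m, fun v => ?_⟩
      obtain ⟨r, hr⟩ := hv₀ ((1 : B ⧸ P) ⊗ₜ[B] m)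
      have hrne : r ≠ 0 := by
        rintro rfl; rw [zero_smul] at hr; exact hm hr.symm
      obtain ⟨s, hs⟩ := hv₀ v
      exact ⟨s * r⁻¹, by rw [← hr, smul_smul, mul_assoc, inv_mul_cancel₀ hrne, mul_one, hs]⟩
  -- step 2: `M = span {x} + P • M`.
  have hspan : (⊤ : Submodule B M) ≤ Submodule.span B {x} ⊔ P • ⊤ := by
    intro m _
    obtain ⟨r, hr⟩ := hxgen ((1 : B ⧸ P) ⊗ₜ[B] m)
    obtain ⟨c, rfl⟩ := Ideal.Quotient.mk_surjective r
    have h1 : (1 : B ⧸ P) ⊗ₜ[B] (m - c • x) = 0 := by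
      have hmk : (Ideal.Quotient.mk P c : B ⧸ P) = c • (1 : B ⧸ P) := by
        rw [← Ideal.Quotient.algebraMap_eq, Algebra.algebraMap_eq_smul_one]
      have : (Ideal.Quotient.mk P c) • ((1 : B ⧸ P) ⊗ₜ[B] x) = (1 : B ⧸ P) ⊗ₜ[B] (c • x) := by
        rw [TensorProduct.smul_tmul', smul_eq_mul, mul_one, hmk, TensorProduct.smul_tmul]
      rw [TensorProduct.tmul_sub, ← this, hr, sub_self]
    have h2 : m - c • x ∈ (P • ⊤ : Submodule B M) := by
      have := congrArg (TensorProduct.quotTensorEquivQuotSMul M P) h1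
      rw [map_zero] at this
      have h3 : TensorProduct.quotTensorEquivQuotSMul M P ((1 : B ⧸ P) ⊗ₜ[B] (m - c • x))
          = Submodule.Quotient.mk (m - c • x) := by
        have := TensorProduct.quotTensorEquivQuotSMul_mk_tmul (M := M) P 1 (m - c • x)
        simpa using this
      rw [h3] at this
      exact (Submodule.Quotient.mk_eq_zero _).mp this
    have : m = c • x + (m - c • x) := by abel
    rw [this]
    exact Submodule.add_mem _
      (Submodule.mem_sup_left (Submodule.smul_mem _ _ (Submodule.mem_span_singleton_self x)))
      (Submodule.mem_sup_right h2)
  -- step 3: `Mₚ` is generated over `A` by `f x`, via Nakayama.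
  have hfin : Module.Finite A Mₚ := Module.Finite.of_isLocalizedModule S f
  have hcyc : Submodule.span A {f x} = ⊤ := by
    have hle : (⊤ : Submodule A Mₚ) ≤
        Submodule.span A {f x} ⊔ (IsLocalRing.maximalIdeal A) • ⊤ := by
      intro y _
      obtain ⟨⟨m, s⟩, hy⟩ := IsLocalizedModule.mk'_surjective S f y
      have hsub : ∀ m : M, f m ∈
          (Submodule.span A {f x} ⊔ (IsLocalRing.maximalIdeal A) • ⊤ : Submodule A Mₚ) := by
        intro m
        have hm := hspan (Submodule.mem_top (x := m))
        rw [Submodule.mem_sup] at hm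
        obtain ⟨u, hu, v, hv, rfl⟩ := hm
        rw [map_add]
        refine Submodule.add_mem _ ?_ ?_
        · obtain ⟨c, rfl⟩ := Submodule.mem_span_singleton.mp hu
          rw [map_smul]
          refine Submodule.mem_sup_left ?_
          rw [← IsScalarTower.algebraMap_smul A c (f x)]
          exact Submodule.smul_mem _ _ (Submodule.mem_span_singleton_self _)
        · refine Submodule.mem_sup_right ?_
          refine Submodule.smul_induction_on hv ?_ ?_
          · intro p hp n _
            rw [map_smul, ← IsScalarTower.algebraMap_smul A p (f n)]
            exact Submodule.smul_mem_smul
              ((IsLocalization.AtPrime.to_map_mem_maximal_iff A P p).mpr hp) Submodule.mem_top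
          · intro n₁ n₂ h1 h2
            rw [map_add]; exact Submodule.add_mem _ h1 h2
      have : y = (IsLocalization.mk' A (1 : B) s) • f m := by
        rw [← hy, ← IsLocalizedModule.mk'_one S f, IsLocalizedModule.mk'_smul_mk', one_smul,
          mul_one]
        rfl
      rw [this]
      exact Submodule.smul_mem _ _ (hsub m)
    have := Submodule.le_of_le_smul_of_le_jacobson_bot
      (Module.finite_def.mp hfin)
      (IsLocalRing.maximalIdeal_le_jacobson ⊥) hle
    exact top_le_iff.mp this
  -- step 4: conclude commutation of the localized endomorphisms.
  have key : ∀ g h : Module.End B M, ∀ y : Mₚ,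
      IsLocalizedModule.map S f f g (IsLocalizedModule.map S f f h y)
        = IsLocalizedModule.map S f f h (IsLocalizedModule.map S f f g y) := by
    intro g h y
    exact aux_comm_of_cyclic (f x) hcyc
      ((IsLocalizedModule.map S f f g).extendScalarsOfIsLocalization S A)
      ((IsLocalizedModule.map S f f h).extendScalarsOfIsLocalization S A) y
  have hab : (a * b : Module.End B M) = a ∘ₗ b := rfl
  have hba : (b * a : Module.End B M) = b ∘ₗ a := rfl
  rw [hab, hba, IsLocalizedModule.map_comp' S f f f, IsLocalizedModule.map_comp' S f f f]
  ext y
  exact key a b y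
end

section
/- Let G be a group, H ≤ G open in a group topology, and χ : H → ℂˣ a character. For any smooth representation ρ of G, there is a natural isomorphism Hom_G(ind_H^G χ, ρ) ≅ Hom_H(χ, ρ|_H) (Frobenius reciprocity for compact induction from an open subgroup). -/
noncomputable section

variable {G : Type} [Group G] [DecidableEq G] (H : Subgroup G) (χ : H →* ℂˣ)

/-- The compactly induced representation `ind_H^G χ` (discrete version): functions
`f : G → ℂ` with `f(hg) = χ(h)f(g)` supported on finitely many cosets `Hg`,
with `G` acting by right translation. -/
def Ind : Submodule ℂ (G → ℂ) where
  carrier := {f | (∀ (h : H) (g : G), f (h * g) = (χ h : ℂ) * f g) ∧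
    ∃ T : Finset G, ∀ g : G, f g ≠ 0 → ∃ t ∈ T, ∃ h : H, g = (h : G) * t}
  add_mem' := by
    rintro a b ⟨ha, Ta, hTa⟩ ⟨hb, Tb, hTb⟩
    refine ⟨fun h g => by simp [Pi.add_apply, ha h g, hb h g, mul_add], Ta ∪ Tb, ?_⟩
    intro g hg
    by_cases h1 : a g ≠ 0
    · obtain ⟨t, ht, h, rfl⟩ := hTa g h1
      exact ⟨t, Finset.mem_union_left _ ht, h, rfl⟩
    · push_neg at h1
      have h2 : b g ≠ 0 := by
        intro h2; apply hg; simp [Pi.add_apply, h1, h2]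
      obtain ⟨t, ht, h, rfl⟩ := hTb g h2
      exact ⟨t, Finset.mem_union_right _ ht, h, rfl⟩
  zero_mem' := ⟨by simp, ∅, by simp⟩
  smul_mem' := by
    rintro c a ⟨ha, Ta, hTa⟩
    refine ⟨fun h g => by simp [Pi.smul_apply, ha h g]; ring, Ta, ?_⟩
    intro g hg
    have : a g ≠ 0 := by
      intro h0; apply hg; simp [Pi.smul_apply, h0]
    exact hTa g this

variable {V : Type} [AddCommGroup V] [Module ℂ V] (ρ : Representation ℂ G V)

/-- The space `Hom_G(ind_H^G χ, ρ)` of `G`-equivariant linear maps, where `G` acts on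
`ind_H^G χ` by right translation: `(g ⋅ f)(x) = f(xg)`. -/
def EqvHom : Submodule ℂ ((Ind H χ) →ₗ[ℂ] V) where
  carrier := {Φ | ∀ (g : G) (f : Ind H χ)
    (hfg : (fun x => (f : G → ℂ) (x * g)) ∈ Ind H χ),
    Φ ⟨fun x => (f : G → ℂ) (x * g), hfg⟩ = ρ g (Φ f)}
  add_mem' := by
    intro a b ha hb g f hfg
    simp [ha g f hfg, hb g f hfg]
  zero_mem' := by intro g f hfg; simp
  smul_mem' := by
    intro c a ha g f hfg
    simp [ha g f hfg]

/-- The space `Hom_H(χ, ρ|_H)`, i.e. the `(H, χ)`-eigenvectors of `ρ`. -/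
def EigenSp : Submodule ℂ V where
  carrier := {v | ∀ h : H, ρ h v = (χ h : ℂ) • v}
  add_mem' := by
    intro a b ha hb h
    simp [ha h, hb h, smul_add]
  zero_mem' := by intro h; simp
  smul_mem' := by
    intro c a ha h
    rw [map_smul, ha h, smul_comm]

open scoped Classical in
/-- The canonical element of `ind_H^G χ` supported on `H`, given by `h ↦ χ(h)`. -/
def f₀ : G → ℂ := fun g => if hg : g ∈ H then (χ ⟨g, hg⟩ : ℂ) else 0

section Aux

lemma f0_left (h : H) (y : G) : f₀ H χ ((h : G) * y) = (χ h : ℂ) * f₀ H χ y := by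
  unfold f₀
  by_cases hy : y ∈ H
  · have hhy : (h : G) * y ∈ H := H.mul_mem h.2 hy
    rw [dif_pos hhy, dif_pos hy]
    have : (⟨(h : G) * y, hhy⟩ : H) = h * ⟨y, hy⟩ := rfl
    rw [this, map_mul, Units.val_mul]
  · have hhy : (h : G) * y ∉ H := fun hc =>
      hy (by simpa using H.mul_mem (H.inv_mem h.2) hc)
    rw [dif_neg hhy, dif_neg hy, mul_zero]

lemma f0_right (h : H) (x : G) : f₀ H χ (x * (h : G)) = (χ h : ℂ) * f₀ H χ x := by
  unfold f₀
  by_cases hx : x ∈ H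
  · have hxh : x * (h : G) ∈ H := H.mul_mem hx h.2
    rw [dif_pos hxh, dif_pos hx]
    have : (⟨x * (h : G), hxh⟩ : H) = ⟨x, hx⟩ * h := rfl
    rw [this, map_mul, Units.val_mul, mul_comm]
  · have hxh : x * (h : G) ∉ H := fun hc =>
      hx (by simpa using H.mul_mem hc (H.inv_mem h.2))
    rw [dif_neg hxh, dif_neg hx, mul_zero]

lemma f0_eq_zero {g : G} (hg : g ∉ H) : f₀ H χ g = 0 := by
  unfold f₀; rw [dif_neg hg]

lemma f0_mem_of_ne {g : G} (hg : f₀ H χ g ≠ 0) : g ∈ H := by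
  by_contra hc; exact hg (f0_eq_zero H χ hc)

lemma tau_mem (t : G) : (fun x => f₀ H χ (x * t⁻¹)) ∈ Ind H χ := by
  refine ⟨fun h g => ?_, {t}, fun g hg => ?_⟩
  · show f₀ H χ ((h : G) * g * t⁻¹) = (χ h : ℂ) * f₀ H χ (g * t⁻¹)
    have : (h : G) * g * t⁻¹ = (h : G) * (g * t⁻¹) := by group
    rw [this, f0_left]
  · have hgH : g * t⁻¹ ∈ H := f0_mem_of_ne H χ hg
    exact ⟨t, Finset.mem_singleton_self t, ⟨g * t⁻¹, hgH⟩, by group⟩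

lemma mk_mul (h : H) (t : G) :
    (Quotient.mk (QuotientGroup.rightRel H) ((h : G) * t)) = Quotient.mk _ t := by
  refine Quotient.sound (QuotientGroup.rightRel_apply.mpr ?_)
  have : t * ((h : G) * t)⁻¹ = (h : G)⁻¹ := by group
  rw [this]; exact H.inv_mem h.2

lemma mk_eq_of_f0_ne {x t : G} (hne : f₀ H χ (x * t⁻¹) ≠ 0) :
    (Quotient.mk (QuotientGroup.rightRel H) t) = Quotient.mk _ x :=
  Quotient.sound (QuotientGroup.rightRel_apply.mpr (f0_mem_of_ne H χ hne))

/-- The coefficient function on right cosets attached to `v ∈ EigenSp`, `f ∈ Ind`. -/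
def coef (v : V) (hv : v ∈ EigenSp H χ ρ) (f : Ind H χ) :
    Quotient (QuotientGroup.rightRel H) → V :=
  Quotient.lift (fun g => (f : G → ℂ) g • ρ g⁻¹ v) (by
    intro a b hab
    have hm : b * a⁻¹ ∈ H := QuotientGroup.rightRel_apply.mp hab
    set h : H := ⟨b * a⁻¹, hm⟩ with hh
    have hb : b = (h : G) * a := by simp [hh]
    rw [hb, f.2.1 h a, mul_inv_rev]
    have h1 : ρ (a⁻¹ * ((h : G))⁻¹) v = (χ h : ℂ)⁻¹ • ρ a⁻¹ v := by
      rw [map_mul, Module.End.mul_apply]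
      have h2 : ((h : G))⁻¹ = ((h⁻¹ : H) : G) := rfl
      rw [h2, hv h⁻¹, map_smul, map_inv χ h, Units.val_inv_eq_inv_val]
    rw [h1, smul_smul]
    congr 1
    rw [mul_comm ((χ h : ℂ)) ((f : G → ℂ) a), mul_assoc,
      mul_inv_cancel₀ (Units.ne_zero (χ h)), mul_one])

lemma coef_mk (v : V) (hv : v ∈ EigenSp H χ ρ) (f : Ind H χ) (g : G) :
    coef H χ ρ v hv f (Quotient.mk _ g) = (f : G → ℂ) g • ρ g⁻¹ v := rfl

lemma coef_supp (v : V) (hv : v ∈ EigenSp H χ ρ) (f : Ind H χ) {T : Finset G}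
    (hT : ∀ g : G, (f : G → ℂ) g ≠ 0 → ∃ t ∈ T, ∃ h : H, g = (h : G) * t) :
    Function.support (coef H χ ρ v hv f) ⊆
      Quotient.mk (QuotientGroup.rightRel H) '' (T : Set G) := by
  intro c hc
  induction c using Quotient.ind with
  | _ g =>
    have hg : (f : G → ℂ) g ≠ 0 := by
      intro h0
      apply hc
      rw [coef_mk, h0, zero_smul]
    obtain ⟨t, htT, h, rfl⟩ := hT g hg
    exact ⟨t, htT, (mk_mul H h t).symm⟩

lemma coef_finite (v : V) (hv : v ∈ EigenSp H χ ρ) (f : Ind H χ) :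
    (Function.support (coef H χ ρ v hv f)).Finite := by
  obtain ⟨T, hT⟩ := f.2.2
  exact (T.finite_toSet.image _).subset (coef_supp H χ ρ v hv f hT)

/-- For `v ∈ EigenSp`, the map `f ↦ ∑_{Hg} f(g) • ρ(g⁻¹) v`. -/
def toHom (v : V) (hv : v ∈ EigenSp H χ ρ) : (Ind H χ) →ₗ[ℂ] V where
  toFun f := ∑ᶠ c, coef H χ ρ v hv f c
  map_add' f g := by
    have h1 : coef H χ ρ v hv (f + g) =
        fun c => coef H χ ρ v hv f c + coef H χ ρ v hv g c := by
      funext c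
      induction c using Quotient.ind with
      | _ a => simp [coef_mk, add_smul]
    show ∑ᶠ c, coef H χ ρ v hv (f + g) c = _
    rw [h1]
    exact finsum_add_distrib (coef_finite H χ ρ v hv f) (coef_finite H χ ρ v hv g)
  map_smul' c f := by
    have h1 : coef H χ ρ v hv (c • f) = fun x => c • coef H χ ρ v hv f x := by
      funext x
      induction x using Quotient.ind with
      | _ a => simp [coef_mk, smul_smul]
    show ∑ᶠ x, coef H χ ρ v hv (c • f) x = c • ∑ᶠ x, coef H χ ρ v hv f x
    rw [h1]
    exact (smul_finsum' c (coef_finite H χ ρ v hv f)).symm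

/-- Right multiplication by `g` on the quotient by `rightRel H`. -/
def qmul (g : G) :
    Quotient (QuotientGroup.rightRel H) ≃ Quotient (QuotientGroup.rightRel H) :=
  Quotient.congr (Equiv.mulRight g) (by
    intro a b
    rw [QuotientGroup.rightRel_apply, QuotientGroup.rightRel_apply]
    have : b * g * (a * g)⁻¹ = b * a⁻¹ := by group
    simp only [Equiv.coe_mulRight, this])

lemma toHom_mem (v : V) (hv : v ∈ EigenSp H χ ρ) :
    toHom H χ ρ v hv ∈ EqvHom H χ ρ := by
  intro g f hfg
  show ∑ᶠ c, coef H χ ρ v hv ⟨_, hfg⟩ c = ρ g (∑ᶠ c, coef H χ ρ v hv f c)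
  have key : ∀ c, coef H χ ρ v hv ⟨fun x => (f : G → ℂ) (x * g), hfg⟩ c
      = ρ g (coef H χ ρ v hv f (qmul H g c)) := by
    intro c
    induction c using Quotient.ind with
    | _ a =>
      show (f : G → ℂ) (a * g) • ρ a⁻¹ v
        = ρ g ((f : G → ℂ) (a * g) • ρ (a * g)⁻¹ v)
      rw [map_smul]
      congr 1
      have h1 : ρ g (ρ (a * g)⁻¹ v) = ρ (g * (a * g)⁻¹) v := by
        rw [map_mul, Module.End.mul_apply]
      rw [h1]
      congr 1
      group
  have hfin : (Function.support fun c => coef H χ ρ v hv f (qmul H g c)).Finite := by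
    have : (Function.support fun c => coef H χ ρ v hv f (qmul H g c))
        ⊆ (qmul H g) ⁻¹' Function.support (coef H χ ρ v hv f) := fun c hc => hc
    exact ((coef_finite H χ ρ v hv f).preimage
      ((qmul H g).injective.injOn)).subset this
  calc ∑ᶠ c, coef H χ ρ v hv ⟨fun x => (f : G → ℂ) (x * g), hfg⟩ c
      = ∑ᶠ c, ρ g (coef H χ ρ v hv f (qmul H g c)) := by
        exact finsum_congr key
    _ = ρ g (∑ᶠ c, coef H χ ρ v hv f (qmul H g c)) :=
        ((ρ g).toAddMonoidHom.map_finsum hfin).symm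
    _ = ρ g (∑ᶠ c, coef H χ ρ v hv f c) := by
        rw [finsum_comp_equiv (qmul H g)]

lemma Phi_f0_mem (hf₀ : f₀ H χ ∈ Ind H χ) (Φ : EqvHom H χ ρ) :
    (Φ : (Ind H χ) →ₗ[ℂ] V) ⟨f₀ H χ, hf₀⟩ ∈ EigenSp H χ ρ := by
  intro h
  have heq : (fun x => f₀ H χ (x * (h : G))) = (χ h : ℂ) • f₀ H χ := by
    funext x
    rw [Pi.smul_apply, smul_eq_mul, f0_right]
  have hmem : (fun x => f₀ H χ (x * (h : G))) ∈ Ind H χ := by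
    rw [heq]; exact Submodule.smul_mem _ _ hf₀
  have h2 := Φ.2 (h : G) ⟨f₀ H χ, hf₀⟩ hmem
  rw [← h2]
  have h3 : (⟨fun x => f₀ H χ (x * (h : G)), hmem⟩ : Ind H χ)
      = (χ h : ℂ) • (⟨f₀ H χ, hf₀⟩ : Ind H χ) := by
    apply Subtype.ext
    rw [SetLike.val_smul]
    exact heq
  rw [h3, map_smul]

lemma toHom_f0 (hf₀ : f₀ H χ ∈ Ind H χ) (v : V) (hv : v ∈ EigenSp H χ ρ) :
    toHom H χ ρ v hv ⟨f₀ H χ, hf₀⟩ = v := by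
  show ∑ᶠ c, coef H χ ρ v hv ⟨f₀ H χ, hf₀⟩ c = v
  have h0 : ∀ c, c ≠ Quotient.mk (QuotientGroup.rightRel H) (1 : G) →
      coef H χ ρ v hv ⟨f₀ H χ, hf₀⟩ c = 0 := by
    intro c hc
    induction c using Quotient.ind with
    | _ g =>
      rw [coef_mk]
      have hg : f₀ H χ g = 0 := by
        by_contra hne
        apply hc
        refine Quotient.sound (QuotientGroup.rightRel_apply.mpr ?_)
        simpa using f0_mem_of_ne H χ hne
      show f₀ H χ g • _ = 0
      rw [hg, zero_smul]
  rw [finsum_eq_single _ _ h0, coef_mk]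
  show f₀ H χ 1 • ρ (1 : G)⁻¹ v = v
  have h1 : f₀ H χ 1 = 1 := by
    unfold f₀
    rw [dif_pos H.one_mem]
    have : (⟨(1 : G), H.one_mem⟩ : H) = 1 := rfl
    rw [this, map_one, Units.val_one]
  rw [h1, one_smul, inv_one, map_one, Module.End.one_apply]

lemma Phi_eq (hf₀ : f₀ H χ ∈ Ind H χ) (Φ : EqvHom H χ ρ) (f : Ind H χ) :
    (Φ : (Ind H χ) →ₗ[ℂ] V) f
      = toHom H χ ρ ((Φ : (Ind H χ) →ₗ[ℂ] V) ⟨f₀ H χ, hf₀⟩)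
          (Phi_f0_mem H χ ρ hf₀ Φ) f := by
  classical
  obtain ⟨T, hT⟩ := f.2.2
  set v := (Φ : (Ind H χ) →ₗ[ℂ] V) ⟨f₀ H χ, hf₀⟩ with hvdef
  set hv := Phi_f0_mem H χ ρ hf₀ Φ
  set S : Finset (Quotient (QuotientGroup.rightRel H)) :=
    T.image (Quotient.mk (QuotientGroup.rightRel H)) with hS
  -- decomposition of f as a finite sum of translates of f₀
  have hdec : f = ∑ c ∈ S, (f : G → ℂ) c.out •
      (⟨fun x => f₀ H χ (x * c.out⁻¹), tau_mem H χ c.out⟩ : Ind H χ) := by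
    apply Subtype.ext
    rw [AddSubmonoidClass.coe_finset_sum]
    funext x
    rw [Finset.sum_apply]
    by_cases hx : Quotient.mk (QuotientGroup.rightRel H) x ∈ S
    · rw [Finset.sum_eq_single (Quotient.mk (QuotientGroup.rightRel H) x)]
      · set t := (Quotient.mk (QuotientGroup.rightRel H) x).out with htdef
        have hout : Quotient.mk (QuotientGroup.rightRel H) t
            = Quotient.mk (QuotientGroup.rightRel H) x := Quotient.out_eq _
        have hrel : x * t⁻¹ ∈ H :=
          QuotientGroup.rightRel_apply.mp (Quotient.exact hout)
        set h : H := ⟨x * t⁻¹, hrel⟩ with hh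
        have hx' : x = (h : G) * t := by simp [hh]
        show (f : G → ℂ) x = (f : G → ℂ) t • f₀ H χ (x * t⁻¹)
        have hf0 : f₀ H χ (x * t⁻¹) = (χ h : ℂ) := by
          unfold f₀; rw [dif_pos hrel]
        rw [hf0, smul_eq_mul]
        calc (f : G → ℂ) x = (f : G → ℂ) ((h : G) * t) := by rw [← hx']
          _ = (χ h : ℂ) * (f : G → ℂ) t := f.2.1 h t
          _ = (f : G → ℂ) t * (χ h : ℂ) := mul_comm _ _
      · intro c hcS hcne
        show (f : G → ℂ) c.out • f₀ H χ (x * c.out⁻¹) = 0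
        by_cases hz : f₀ H χ (x * c.out⁻¹) = 0
        · rw [hz, smul_zero]
        · exact absurd ((Quotient.out_eq c).symm.trans (mk_eq_of_f0_ne H χ hz)) hcne
      · intro hc; exact absurd hx hc
    · have hfx : (f : G → ℂ) x = 0 := by
        by_contra hne
        obtain ⟨t, htT, h, rfl⟩ := hT x hne
        exact hx (by
          rw [mk_mul H h t]
          exact Finset.mem_image_of_mem _ htT)
      rw [hfx]
      refine (Finset.sum_eq_zero ?_).symm
      intro c hcS
      show (f : G → ℂ) c.out • f₀ H χ (x * c.out⁻¹) = 0
      by_cases hz : f₀ H χ (x * c.out⁻¹) = 0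
      · rw [hz, smul_zero]
      · exfalso
        apply hx
        rw [← mk_eq_of_f0_ne H χ hz, Quotient.out_eq]
        exact hcS
  -- apply Φ to the decomposition
  have hPhi : (Φ : (Ind H χ) →ₗ[ℂ] V) f
      = ∑ c ∈ S, (f : G → ℂ) c.out • ρ c.out⁻¹ v := by
    conv_lhs => rw [hdec]
    rw [map_sum]
    refine Finset.sum_congr rfl fun c _ => ?_
    rw [map_smul]
    congr 1
    exact Φ.2 c.out⁻¹ ⟨f₀ H χ, hf₀⟩ (tau_mem H χ c.out)
  rw [hPhi]
  -- identify with the finsum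
  show _ = ∑ᶠ c, coef H χ ρ v hv f c
  rw [finsum_eq_finset_sum_of_support_subset _ (s := S) ?_]
  · refine (Finset.sum_congr rfl fun c _ => ?_).symm
    conv_lhs => rw [← Quotient.out_eq c]
    rw [coef_mk]
  · intro c hc
    have := coef_supp H χ ρ v hv f hT hc
    obtain ⟨t, htT, rfl⟩ := this
    exact Finset.mem_coe.mpr (Finset.mem_image_of_mem _ htT)

end Aux

/-- **Frobenius reciprocity for compact induction from an open
subgroup.** For any representation `ρ` of `G` there is a natural isomorphism
`Hom_G(ind_H^G χ, ρ) ≅ Hom_H(χ, ρ|_H)`, given by `Φ ↦ Φ(f₀)` where `f₀` is the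
canonical `χ`-equivariant function supported on `H`. -/
theorem stmt15 (hf₀ : f₀ H χ ∈ Ind H χ) :
    ∃ e : (EqvHom H χ ρ) ≃ₗ[ℂ] (EigenSp H χ ρ),
      ∀ Φ : EqvHom H χ ρ, (e Φ : V) = (Φ : (Ind H χ) →ₗ[ℂ] V) ⟨f₀ H χ, hf₀⟩ := by
  refine ⟨LinearEquiv.ofLinear
    { toFun := fun Φ => ⟨(Φ : (Ind H χ) →ₗ[ℂ] V) ⟨f₀ H χ, hf₀⟩, Phi_f0_mem H χ ρ hf₀ Φ⟩
      map_add' := fun Φ Ψ => by apply Subtype.ext; simp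
      map_smul' := fun c Φ => by apply Subtype.ext; simp }
    { toFun := fun v => ⟨toHom H χ ρ (v : V) v.2, toHom_mem H χ ρ (v : V) v.2⟩
      map_add' := fun v w => by
        apply Subtype.ext
        apply LinearMap.ext
        intro f
        show toHom H χ ρ ((v : V) + w) _ f = toHom H χ ρ (v : V) v.2 f + toHom H χ ρ (w : V) w.2 f
        show ∑ᶠ c, coef H χ ρ _ _ f c = (∑ᶠ c, coef H χ ρ _ _ f c) + ∑ᶠ c, coef H χ ρ _ _ f c
        have h1 : coef H χ ρ ((v : V) + w) (Submodule.add_mem _ v.2 w.2) f =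
            fun c => coef H χ ρ (v : V) v.2 f c + coef H χ ρ (w : V) w.2 f c := by
          funext c
          induction c using Quotient.ind with
          | _ a => simp [coef_mk, smul_add]
        rw [h1]
        exact finsum_add_distrib (coef_finite H χ ρ _ _ f) (coef_finite H χ ρ _ _ f)
      map_smul' := fun c v => by
        apply Subtype.ext
        apply LinearMap.ext
        intro f
        show toHom H χ ρ (c • (v : V)) _ f = c • toHom H χ ρ (v : V) v.2 f
        show ∑ᶠ x, coef H χ ρ _ _ f x = c • ∑ᶠ x, coef H χ ρ _ _ f x
        have h1 : coef H χ ρ (c • (v : V)) (Submodule.smul_mem _ c v.2) f =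
            fun x => c • coef H χ ρ (v : V) v.2 f x := by
          funext x
          induction x using Quotient.ind with
          | _ a => simp [coef_mk, smul_comm c]
        rw [h1]
        exact (smul_finsum' c (coef_finite H χ ρ _ _ f)).symm }
    ?_ ?_, fun Φ => rfl⟩
  · apply LinearMap.ext
    intro v
    apply Subtype.ext
    exact toHom_f0 H χ ρ hf₀ (v : V) v.2
  · apply LinearMap.ext
    intro Φ
    apply Subtype.ext
    apply LinearMap.ext
    intro f
    exact (Phi_eq H χ ρ hf₀ Φ f).symm
end
end
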